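/- S_n / n converges in distribution, as n → ∞, to the three-point law p·δ_{(p−q)/(2+q−p)} + r·δ_0 + q·δ_{−(p−q)/(2+q−p)} (i.e. the limit S takes the value (p−q)/(2+q−p) with probability p, the value 0 with probability r, and the value −(p−q)/(2+q−p) with probability q). Moreover, for every real r' > 0, E((S_n/n)^{r'}) → E(S^{r'}) as n → ∞; in particular E(S_n/n) → (p−q)²/(2+q−p) and Var(S_n/n) → ((p−q)²/(2+q−p)²)·(p + q − (p−q)²). -/

import Mathlib

/-!
Put `α = (p - q) / 2` and `a = α / (1 - α) = (p - q) / (2 + q - p)`, so that `a = α (1 + a)`.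
The memory rule gives `E[Xₙ₊₁ | X₁, …, Xₙ] = α (X₁ + Xₙ)`, hence the centred steps
`Yₖ = Xₖ - a X₁` satisfy `E[Yₖ₊₁ | X₁, …, Xₖ] = α Yₖ` for `k ≥ 2`, with `|α| ≤ 1/2`. Then
`cₙ = E[(Y₁ + ⋯ + Yₙ) Yₙ]` obeys `cₙ₊₁ = α cₙ + E[Yₙ₊₁²]` and stays bounded, so
`E[(Y₁ + ⋯ + Yₙ)²]` grows at most linearly and `Sₙ/n - a X₁ → 0` in `L²`, hence in probability.
As `|Sₙ/n| ≤ 1`, dominated convergence along a.e. convergent subsequences gives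
`E[g(Sₙ/n)] → E[g(a X₁)]` for every continuous `g`, and `a X₁` has the three-point law.
-/

open MeasureTheory ProbabilityTheory Filter Real
open scoped ENNReal NNReal Topology Classical

noncomputable section

/-- The σ-algebra `σ(X_1, …, X_n)` generated by the first `n` steps. -/
def sigmaUpTo {Ω : Type*} (X : ℕ → Ω → ℝ) (n : ℕ) : MeasurableSpace Ω :=
  MeasurableSpace.comap (fun ω (k : Fin n) => X ((k : ℕ) + 1) ω) inferInstance

/-- Weak convergence of a sequence of measures on `ℝ` (convergence in distribution):
integrals of every bounded continuous function converge. -/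
def TendstoInDist (μs : ℕ → Measure ℝ) (ν : Measure ℝ) : Prop :=
  ∀ f : BoundedContinuousFunction ℝ ℝ,
    Tendsto (fun n => ∫ x, f x ∂(μs n)) atTop (𝓝 (∫ x, f x ∂ν))

section Convergence

variable {Ω : Type*} [MeasurableSpace Ω] {μ : Measure Ω}

theorem tendstoInMeasure_of_tendsto_integral_sq [IsFiniteMeasure μ] {F : ℕ → Ω → ℝ}
    {G : Ω → ℝ} (hint : ∀ n, Integrable (fun ω => (F n ω - G ω) ^ 2) μ)
    (hlim : Tendsto (fun n => ∫ ω, (F n ω - G ω) ^ 2 ∂μ) atTop (𝓝 0)) :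
    TendstoInMeasure μ F atTop G := by
  refine tendstoInMeasure_iff_measureReal_dist.2 fun ε hε => ?_
  have hmarkov : ∀ n, μ.real {ω | ε ≤ dist (F n ω) (G ω)}
      ≤ (∫ ω, (F n ω - G ω) ^ 2 ∂μ) / ε ^ 2 := by
    intro n
    have hset : {ω | ε ≤ dist (F n ω) (G ω)} = {ω | ε ^ 2 ≤ (F n ω - G ω) ^ 2} := by
      ext ω
      change ε ≤ dist _ _ ↔ ε ^ 2 ≤ (F n ω - G ω) ^ 2
      rw [Real.dist_eq, ← sq_abs (F n ω - G ω), sq_le_sq₀ hε.le (abs_nonneg _)]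
    rw [hset, le_div_iff₀ (by positivity), mul_comm]
    exact mul_meas_ge_le_integral_of_nonneg (ae_of_all _ fun ω => sq_nonneg _) (hint n) _
  have hbound := hlim.div_const (ε ^ 2)
  rw [zero_div] at hbound
  exact squeeze_zero (fun n => measureReal_nonneg) hmarkov hbound

theorem tendsto_integral_comp_of_tendstoInMeasure [IsFiniteMeasure μ] {E : Type*}
    [PseudoMetricSpace E] {F : ℕ → Ω → E} {G : Ω → E} {K : Set E} (hK : IsCompact K)
    (hF : ∀ n, AEStronglyMeasurable (F n) μ) (hFK : ∀ n, ∀ᵐ ω ∂μ, F n ω ∈ K)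
    (hFG : TendstoInMeasure μ F atTop G) {g : E → ℝ} (hg : Continuous g) :
    Tendsto (fun n => ∫ ω, g (F n ω) ∂μ) atTop (𝓝 (∫ ω, g (G ω) ∂μ)) := by
  obtain ⟨M, hM⟩ := hK.exists_bound_of_continuousOn hg.continuousOn
  refine tendsto_of_subseq_tendsto fun ns hns => ?_
  obtain ⟨ms, -, hae⟩ := TendstoInMeasure.exists_seq_tendsto_ae fun ε hε => (hFG ε hε).comp hns
  refine ⟨ms, tendsto_integral_of_dominated_convergence (fun _ => M)
    (fun k => hg.comp_aestronglyMeasurable (hF _)) (integrable_const M)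
    (fun k => (hFK _).mono fun ω hω => hM _ hω) ?_⟩
  filter_upwards [hae] with ω hω using (hg.tendsto _).comp hω

theorem integral_comp_of_sign_valued [IsFiniteMeasure μ] {W : Ω → ℝ} (hW : Measurable W)
    (hval : ∀ ω, W ω = 1 ∨ W ω = -1 ∨ W ω = 0) (φ : ℝ → ℝ) :
    ∫ ω, φ (W ω) ∂μ = φ 1 * μ.real {ω | W ω = 1} + φ (-1) * μ.real {ω | W ω = -1}
      + φ 0 * μ.real {ω | W ω = 0} := by
  have hmeas : ∀ c, MeasurableSet {ω | W ω = c} := fun c => hW (measurableSet_singleton c)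
  have hind : ∀ c, Integrable ({ω | W ω = c}.indicator fun _ => φ c) μ := fun c =>
    (integrable_const _).indicator (hmeas c)
  have hsplit : (fun ω => φ (W ω)) = {ω | W ω = 1}.indicator (fun _ => φ 1)
      + {ω | W ω = -1}.indicator (fun _ => φ (-1)) + {ω | W ω = 0}.indicator (fun _ => φ 0) := by
    ext ω
    rcases hval ω with h | h | h <;> norm_num [Set.indicator_apply, h]
  rw [hsplit, integral_add' ((hind 1).add (hind (-1))) (hind 0),
    integral_add' (hind 1) (hind (-1)), integral_indicator_const _ (hmeas 1),
    integral_indicator_const _ (hmeas (-1)), integral_indicator_const _ (hmeas 0)]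
  simp only [smul_eq_mul]
  ring

theorem tendstoInDist_map_iff {F : ℕ → Ω → ℝ} (hF : ∀ n, AEMeasurable (F n) μ)
    {ν : Measure ℝ} : TendstoInDist (fun n => μ.map (F n)) ν ↔
      ∀ f : BoundedContinuousFunction ℝ ℝ,
        Tendsto (fun n => ∫ ω, f (F n ω) ∂μ) atTop (𝓝 (∫ x, f x ∂ν)) := by
  unfold TendstoInDist
  simp only [integral_map (hF _) (BoundedContinuousFunction.continuous _).aestronglyMeasurable]

theorem tendsto_variance_of_tendsto_integral [IsProbabilityMeasure μ] {ι : Type*}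
    {l : Filter ι} {F : ι → Ω → ℝ} (hF : ∀ i, MemLp (F i) 2 μ) {m₁ m₂ : ℝ}
    (h₁ : Tendsto (fun i => ∫ ω, F i ω ∂μ) l (𝓝 m₁))
    (h₂ : Tendsto (fun i => ∫ ω, F i ω ^ 2 ∂μ) l (𝓝 m₂)) :
    Tendsto (fun i => variance (F i) μ) l (𝓝 (m₂ - m₁ ^ 2)) := by
  simp only [variance_eq_sub (hF _)]
  exact h₂.sub (h₁.pow 2)

theorem integral_add_smul_dirac (g : ℝ → ℝ) {p q r : ℝ} (hp : 0 ≤ p) (hq : 0 ≤ q) (hr : 0 ≤ r)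
    (a b c : ℝ) :
    ∫ x, g x ∂(ENNReal.ofReal p • Measure.dirac a + ENNReal.ofReal r • Measure.dirac b
      + ENNReal.ofReal q • Measure.dirac c) = p * g a + r * g b + q * g c := by
  have hint : ∀ (t x : ℝ), Integrable g (ENNReal.ofReal t • Measure.dirac x) := fun t x =>
    (integrable_dirac enorm_lt_top).smul_measure ENNReal.ofReal_ne_top
  rw [integral_add_measure ((hint p a).add_measure (hint r b)) (hint q c),
    integral_add_measure (hint p a) (hint r b)]
  simp [integral_smul_measure, integral_dirac, ENNReal.toReal_ofReal, hp, hq, hr]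

end Convergence

section ContractingProcess

open Finset

variable {Ω : Type*} {mΩ : MeasurableSpace Ω} {μ : Measure Ω}

theorem integral_mul_eq_of_condExp_eq [IsFiniteMeasure μ] {m : MeasurableSpace Ω} (hm : m ≤ mΩ)
    {Z f g : Ω → ℝ} (hZ : StronglyMeasurable[m] Z) (hZf : Integrable (Z * f) μ)
    (hf : Integrable f μ) (hfg : μ[f | m] =ᵐ[μ] g) :
    ∫ ω, Z ω * f ω ∂μ = ∫ ω, Z ω * g ω ∂μ :=
  calc ∫ ω, Z ω * f ω ∂μ = ∫ ω, (μ[Z * f | m]) ω ∂μ := (integral_condExp hm).symm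
    _ = ∫ ω, Z ω * g ω ∂μ := integral_congr_ae <|
        (condExp_mul_of_stronglyMeasurable_left hZ hZf hf).trans
          (hfg.mono fun ω hω => by simp only [Pi.mul_apply, hω])

variable {ℱ : Filtration ℕ mΩ} {Y : ℕ → Ω → ℝ} {α C : ℝ}

theorem abs_sum_range_le (hYb : ∀ n ω, |Y n ω| ≤ C) (n : ℕ) (ω : Ω) :
    |∑ k ∈ range n, Y k ω| ≤ n * C :=
  calc |∑ k ∈ range n, Y k ω| ≤ ∑ k ∈ range n, |Y k ω| := abs_sum_le_sum_abs _ _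
    _ ≤ n * C := (sum_le_card_nsmul _ _ _ fun k _ => hYb k ω).trans_eq (by simp)

theorem memLp_top_sum_range (hY : Adapted ℱ Y) (hYb : ∀ n ω, |Y n ω| ≤ C) (n : ℕ) :
    MemLp (fun ω => ∑ k ∈ range n, Y k ω) ⊤ μ :=
  memLp_top_of_bound (measurable_sum _ fun _ _ => hY.measurable).aestronglyMeasurable _
    (ae_of_all _ fun ω => abs_sum_range_le hYb n ω)

theorem integrable_sum_range_mul [IsFiniteMeasure μ] (hY : Adapted ℱ Y) (hYb : ∀ n ω, |Y n ω| ≤ C)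
    {f : Ω → ℝ} (hf : MemLp f ⊤ μ) (n : ℕ) :
    Integrable (fun ω => (∑ k ∈ range n, Y k ω) * f ω) μ :=
  (hf.mul' (memLp_top_sum_range hY hYb n)).integrable le_top

variable [IsProbabilityMeasure μ]

theorem abs_integral_le_of_abs_le {f : Ω → ℝ} {c : ℝ} (h : ∀ ω, |f ω| ≤ c) :
    |∫ ω, f ω ∂μ| ≤ c := by
  simpa using norm_integral_le_of_norm_le_const (μ := μ)
    (ae_of_all _ fun ω => (Real.norm_eq_abs _).trans_le (h ω))

theorem abs_integral_sum_range_mul_le_of_le_one (hYb : ∀ n ω, |Y n ω| ≤ C) {n : ℕ}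
    (hn : n ≤ 1) : |∫ ω, (∑ k ∈ range (n + 1), Y k ω) * Y n ω ∂μ| ≤ 2 * C ^ 2 := by
  refine abs_integral_le_of_abs_le fun ω => ?_
  have hC : 0 ≤ C := (abs_nonneg _).trans (hYb 0 ω)
  rw [abs_mul]
  calc |∑ k ∈ range (n + 1), Y k ω| * |Y n ω| ≤ ((n + 1 : ℕ) * C) * C :=
        mul_le_mul (abs_sum_range_le hYb _ ω) (hYb n ω) (abs_nonneg _) (by positivity)
    _ ≤ 2 * C ^ 2 := by
        have : ((n + 1 : ℕ) : ℝ) ≤ 2 := by exact_mod_cast Nat.succ_le_succ hn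
        nlinarith [mul_nonneg hC hC]

theorem abs_integral_sum_range_mul_le (hY : Adapted ℱ Y) (hYb : ∀ n ω, |Y n ω| ≤ C)
    (hα : |α| ≤ 1 / 2) (hcond : ∀ n, 1 ≤ n → μ[Y (n + 1) | ℱ n] =ᵐ[μ] fun ω => α * Y n ω)
    (n : ℕ) : |∫ ω, (∑ k ∈ range (n + 1), Y k ω) * Y n ω ∂μ| ≤ 2 * C ^ 2 := by
  have hYL : ∀ n, MemLp (Y n) ⊤ μ := fun n => memLp_top_of_bound
    hY.measurable.aestronglyMeasurable C (ae_of_all _ fun ω => (hYb n ω))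
  induction n with
  | zero => exact abs_integral_sum_range_mul_le_of_le_one hYb zero_le_one
  | succ n ih =>
    rcases Nat.eq_zero_or_pos n with rfl | hn
    · exact abs_integral_sum_range_mul_le_of_le_one hYb le_rfl
    have hT : StronglyMeasurable[ℱ n] fun ω => ∑ k ∈ range (n + 1), Y k ω :=
      (measurable_sum _ fun k hk =>
        hY.measurable_le (Nat.lt_succ_iff.mp (mem_range.mp hk))).stronglyMeasurable
    have hstep : ∫ ω, (∑ k ∈ range (n + 1), Y k ω) * Y (n + 1) ω ∂μ
        = α * ∫ ω, (∑ k ∈ range (n + 1), Y k ω) * Y n ω ∂μ := by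
      rw [integral_mul_eq_of_condExp_eq (ℱ.le n) hT (integrable_sum_range_mul hY hYb (hYL _) _)
        ((hYL _).integrable le_top) (hcond n hn), ← integral_const_mul]
      simp only [mul_left_comm]
    have hsq : |∫ ω, Y (n + 1) ω * Y (n + 1) ω ∂μ| ≤ C ^ 2 := by
      refine abs_integral_le_of_abs_le fun ω => ?_
      rw [abs_mul, sq]
      exact mul_le_mul (hYb _ ω) (hYb _ ω) (abs_nonneg _) ((abs_nonneg _).trans (hYb 0 ω))
    have hsplit : ∫ ω, (∑ k ∈ range (n + 2), Y k ω) * Y (n + 1) ω ∂μ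
        = α * ∫ ω, (∑ k ∈ range (n + 1), Y k ω) * Y n ω ∂μ
          + ∫ ω, Y (n + 1) ω * Y (n + 1) ω ∂μ := by
      simp only [sum_range_succ _ (n + 1), add_mul]
      rw [integral_add (integrable_sum_range_mul hY hYb (hYL _) _)
        (((hYL _).mul' (hYL _)).integrable le_top), hstep]
    rw [hsplit]
    calc |α * ∫ ω, (∑ k ∈ range (n + 1), Y k ω) * Y n ω ∂μ + ∫ ω, Y (n + 1) ω * Y (n + 1) ω ∂μ|
        ≤ |α| * |∫ ω, (∑ k ∈ range (n + 1), Y k ω) * Y n ω ∂μ|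
          + |∫ ω, Y (n + 1) ω * Y (n + 1) ω ∂μ| := by rw [← abs_mul]; exact abs_add_le _ _
      _ ≤ 1 / 2 * (2 * C ^ 2) + C ^ 2 :=
          add_le_add (mul_le_mul hα ih (abs_nonneg _) (by norm_num)) hsq
      _ = 2 * C ^ 2 := by ring

theorem integral_sq_sum_range_le (hY : Adapted ℱ Y) (hYb : ∀ n ω, |Y n ω| ≤ C)
    (hα : |α| ≤ 1 / 2) (hcond : ∀ n, 1 ≤ n → μ[Y (n + 1) | ℱ n] =ᵐ[μ] fun ω => α * Y n ω)
    (n : ℕ) : ∫ ω, (∑ k ∈ range n, Y k ω) ^ 2 ∂μ ≤ 4 * C ^ 2 * n := by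
  induction n with
  | zero => simp
  | succ n ih =>
    have hYL : MemLp (Y n) ⊤ μ := memLp_top_of_bound
      hY.measurable.aestronglyMeasurable C (ae_of_all _ fun ω => (hYb n ω))
    have hexpand : ∀ ω, (∑ k ∈ range (n + 1), Y k ω) ^ 2 = (∑ k ∈ range n, Y k ω) ^ 2
        + 2 * ((∑ k ∈ range (n + 1), Y k ω) * Y n ω) - Y n ω * Y n ω := fun ω => by
      rw [sum_range_succ]; ring
    have hsq_int : ∀ m, Integrable (fun ω => (∑ k ∈ range m, Y k ω) ^ 2) μ := fun m => by
      simpa only [sq] using integrable_sum_range_mul hY hYb (memLp_top_sum_range hY hYb m) m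
    have hcov_int : Integrable (fun ω => 2 * ((∑ k ∈ range (n + 1), Y k ω) * Y n ω)) μ :=
      (integrable_sum_range_mul hY hYb hYL _).const_mul 2
    have hsum_int : Integrable (fun ω => (∑ k ∈ range n, Y k ω) ^ 2
        + 2 * ((∑ k ∈ range (n + 1), Y k ω) * Y n ω)) μ := (hsq_int n).add hcov_int
    rw [integral_congr_ae (ae_of_all _ hexpand),
      integral_sub hsum_int ((hYL.mul' hYL).integrable le_top),
      integral_add (hsq_int n) hcov_int, integral_const_mul]
    have hcov := (le_abs_self _).trans (abs_integral_sum_range_mul_le hY hYb hα hcond n)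
    have hsq_nonneg : 0 ≤ ∫ ω, Y n ω * Y n ω ∂μ := integral_nonneg fun ω => mul_self_nonneg _
    push_cast
    linarith

end ContractingProcess

section SigmaUpTo

variable {Ω : Type*} {X : ℕ → Ω → ℝ}

theorem measurable_sigmaUpTo {m n : ℕ} (hm : 1 ≤ m) (hmn : m ≤ n) :
    Measurable[sigmaUpTo X n] (X m) := by
  have h : X m = (fun v : Fin n → ℝ => v ⟨m - 1, by omega⟩) ∘
      (fun ω (k : Fin n) => X ((k : ℕ) + 1) ω) := by
    funext ω
    simp only [Function.comp_apply, Nat.sub_add_cancel hm]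
  rw [h]
  exact (measurable_pi_apply _).comp (Measurable.of_comap_le le_rfl)

theorem sigmaUpTo_mono : Monotone (sigmaUpTo X) := fun m n hmn =>
  Measurable.comap_le <| @measurable_pi_lambda _ _ _ (sigmaUpTo X n) _ _ fun k : Fin m =>
    measurable_sigmaUpTo (m := k + 1) le_add_self (by omega)

theorem abs_div_le_one_of_abs_le_one (hXb : ∀ n, 1 ≤ n → ∀ ω, |X n ω| ≤ 1) {S : ℕ → Ω → ℝ}
    (hS : ∀ n ω, S n ω = ∑ k ∈ Finset.Icc 1 n, X k ω) (n : ℕ) (ω : Ω) : |S n ω / n| ≤ 1 := by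
  rcases Nat.eq_zero_or_pos n with rfl | hn
  · simp
  rw [abs_div, Nat.abs_cast, div_le_one (by exact_mod_cast hn), hS]
  calc |∑ k ∈ Finset.Icc 1 n, X k ω| ≤ ∑ k ∈ Finset.Icc 1 n, |X k ω| :=
        Finset.abs_sum_le_sum_abs _ _
    _ ≤ ∑ _k ∈ Finset.Icc 1 n, (1 : ℝ) :=
        Finset.sum_le_sum fun k hk => hXb k (Finset.mem_Icc.1 hk).1 ω
    _ = n := by simp

variable [MeasurableSpace Ω]

theorem sigmaUpTo_le (hX : ∀ n, Measurable (X n)) (n : ℕ) :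
    sigmaUpTo X n ≤ ‹MeasurableSpace Ω› :=
  (measurable_pi_lambda _ fun _ => hX _).comap_le

/-- Indexed from `0`: the `n`-th σ-algebra is `σ(X₁, …, Xₙ₊₁)`. -/
def sigmaUpToSucc (X : ℕ → Ω → ℝ) (hX : ∀ n, Measurable (X n)) :
    Filtration ℕ ‹MeasurableSpace Ω› where
  seq n := sigmaUpTo X (n + 1)
  mono' _ _ hmn := sigmaUpTo_mono (Nat.succ_le_succ hmn)
  le' n := sigmaUpTo_le hX (n + 1)

end SigmaUpTo

section ERWD

variable {Ω : Type*} [MeasurableSpace Ω] {P : Measure Ω} {X : ℕ → Ω → ℝ}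

theorem condExp_succ_eq_of_condExp_indicator [IsFiniteMeasure P] (hX : ∀ n, Measurable (X n))
    (hXval : ∀ n, 1 ≤ n → ∀ ω, X n ω = 1 ∨ X n ω = -1 ∨ X n ω = 0) {p q : ℝ} {n : ℕ}
    (hn : 1 ≤ n)
    (hcondp : P[Set.indicator {ω | X (n + 1) ω = 1} (fun _ => (1 : ℝ)) | sigmaUpTo X n]
        =ᵐ[P] fun ω =>
          (p * ((if X 1 ω = 1 then (1 : ℝ) else 0) + (if X n ω = 1 then (1 : ℝ) else 0))
            + q * ((if X 1 ω = -1 then (1 : ℝ) else 0)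
              + (if X n ω = -1 then (1 : ℝ) else 0))) / 2)
    (hcondq : P[Set.indicator {ω | X (n + 1) ω = -1} (fun _ => (1 : ℝ)) | sigmaUpTo X n]
        =ᵐ[P] fun ω =>
          (q * ((if X 1 ω = 1 then (1 : ℝ) else 0) + (if X n ω = 1 then (1 : ℝ) else 0))
            + p * ((if X 1 ω = -1 then (1 : ℝ) else 0)
              + (if X n ω = -1 then (1 : ℝ) else 0))) / 2) :
    P[X (n + 1) | sigmaUpTo X n] =ᵐ[P] fun ω => (p - q) / 2 * (X 1 ω + X n ω) := by
  have hind : ∀ c : ℝ, Integrable ({ω | X (n + 1) ω = c}.indicator fun _ => (1 : ℝ)) P :=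
    fun c => (integrable_const 1).indicator (hX _ (measurableSet_singleton c))
  have hdiff : X (n + 1) = {ω | X (n + 1) ω = 1}.indicator (fun _ => 1)
      - {ω | X (n + 1) ω = -1}.indicator (fun _ => 1) := by
    ext ω
    rcases hXval (n + 1) (by omega) ω with h | h | h <;> norm_num [Set.indicator_apply, h]
  rw [hdiff]
  filter_upwards [condExp_sub (m := sigmaUpTo X n) (hind 1) (hind (-1)), hcondp, hcondq]
    with ω hsub hp hq
  rw [hsub, Pi.sub_apply, hp, hq]
  rcases hXval 1 le_rfl ω with h1 | h1 | h1 <;> rcases hXval n hn ω with h | h | h <;>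
    norm_num [h1, h] <;> ring

theorem condExp_sub_mul_first_eq [IsFiniteMeasure P] (hX : ∀ n, Measurable (X n))
    (hXb : ∀ n, 1 ≤ n → ∀ ω, |X n ω| ≤ 1) {α : ℝ} (hα : α ≠ 1) {n : ℕ} (hn : 1 ≤ n)
    (hcond : P[X (n + 1) | sigmaUpTo X n] =ᵐ[P] fun ω => α * (X 1 ω + X n ω)) :
    P[fun ω => X (n + 1) ω - α / (1 - α) * X 1 ω | sigmaUpTo X n]
      =ᵐ[P] fun ω => α * (X n ω - α / (1 - α) * X 1 ω) := by
  have hint : ∀ m, 1 ≤ m → Integrable (X m) P := fun m hm =>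
    .of_bound (hX m).aestronglyMeasurable 1 (ae_of_all _ fun ω => hXb m hm ω)
  have hfirst :
      P[fun ω => α / (1 - α) * X 1 ω | sigmaUpTo X n] = fun ω => α / (1 - α) * X 1 ω :=
    condExp_of_stronglyMeasurable (sigmaUpTo_le hX n)
      ((measurable_sigmaUpTo le_rfl hn).const_mul _).stronglyMeasurable
      ((hint 1 le_rfl).const_mul _)
  filter_upwards [condExp_sub (m := sigmaUpTo X n) (hint (n + 1) (by omega))
    ((hint 1 le_rfl).const_mul (α / (1 - α))), hcond] with ω hsub hω
  have h1α : 1 - α ≠ 0 := sub_ne_zero.2 (Ne.symm hα)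
  change P[X (n + 1) - fun ω => α / (1 - α) * X 1 ω | _] ω = _
  rw [hsub, Pi.sub_apply, hω, hfirst]
  field_simp
  ring

theorem integral_sq_div_sub_le [IsProbabilityMeasure P] (hX : ∀ n, Measurable (X n))
    (hXb : ∀ n, 1 ≤ n → ∀ ω, |X n ω| ≤ 1) {α : ℝ} (hα : |α| ≤ 1 / 2)
    (hcond : ∀ n, 2 ≤ n → P[X (n + 1) | sigmaUpTo X n] =ᵐ[P] fun ω => α * (X 1 ω + X n ω))
    {S : ℕ → Ω → ℝ} (hS : ∀ n ω, S n ω = ∑ k ∈ Finset.Icc 1 n, X k ω) {n : ℕ} (hn : 1 ≤ n) :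
    ∫ ω, (S n ω / n - α / (1 - α) * X 1 ω) ^ 2 ∂P ≤ 16 / (n : ℝ) := by
  obtain ⟨hα_lo, hα_hi⟩ := abs_le.1 hα
  set a := α / (1 - α)
  have ha : |a| ≤ 1 := by
    rw [abs_div, abs_of_pos (show 0 < 1 - α by linarith), div_le_one (by linarith)]
    exact abs_le.2 ⟨by linarith, by linarith⟩
  set Y : ℕ → Ω → ℝ := fun k ω => X (k + 1) ω - a * X 1 ω
  have hY : Adapted (sigmaUpToSucc X hX) Y := fun k =>
    (measurable_sigmaUpTo (by omega) le_rfl).sub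
      ((measurable_sigmaUpTo le_rfl (by omega)).const_mul a)
  have hYb : ∀ k ω, |Y k ω| ≤ 2 := fun k ω =>
    calc |Y k ω| ≤ |X (k + 1) ω| + |a| * |X 1 ω| := (abs_sub _ _).trans_eq (by rw [abs_mul])
      _ ≤ 1 + 1 * 1 := add_le_add (hXb _ (by omega) ω)
          (mul_le_mul ha (hXb 1 le_rfl ω) (abs_nonneg _) zero_le_one)
      _ = 2 := by norm_num
  have hYcond : ∀ k, 1 ≤ k → P[Y (k + 1) | sigmaUpToSucc X hX k] =ᵐ[P] fun ω => α * Y k ω :=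
    fun k hk => condExp_sub_mul_first_eq hX hXb (by linarith) (by omega)
      (hcond (k + 1) (by omega))
  have hn0 : (n : ℝ) ≠ 0 := by positivity
  have hsum : ∀ ω, S n ω / n - a * X 1 ω = (∑ k ∈ Finset.range n, Y k ω) / n := fun ω => by
    have hshift : ∑ k ∈ Finset.range n, X (k + 1) ω = S n ω := by
      rw [hS, Finset.range_eq_Ico, Finset.sum_Ico_add' fun k => X k ω]
      rfl
    simp only [Y, Finset.sum_sub_distrib, hshift, Finset.sum_const, Finset.card_range,
      nsmul_eq_mul]
    field_simp
  calc ∫ ω, (S n ω / n - a * X 1 ω) ^ 2 ∂P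
      = (∫ ω, (∑ k ∈ Finset.range n, Y k ω) ^ 2 ∂P) / n ^ 2 := by
        simp_rw [hsum, div_pow]
        exact integral_div _ _
    _ ≤ 4 * 2 ^ 2 * n / n ^ 2 := by gcongr; exact integral_sq_sum_range_le hY hYb hα hYcond n
    _ = 16 / n := by field_simp; ring

theorem measurable_div_of_eq_sum (hX : ∀ n, Measurable (X n)) {S : ℕ → Ω → ℝ}
    (hS : ∀ n ω, S n ω = ∑ k ∈ Finset.Icc 1 n, X k ω) (n : ℕ) :
    Measurable fun ω => S n ω / n := by
  simp only [hS]
  exact (Finset.measurable_sum _ fun k _ => hX k).div_const _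

theorem memLp_div_of_eq_sum [IsFiniteMeasure P] (hX : ∀ n, Measurable (X n))
    (hXb : ∀ n, 1 ≤ n → ∀ ω, |X n ω| ≤ 1)
    {S : ℕ → Ω → ℝ} (hS : ∀ n ω, S n ω = ∑ k ∈ Finset.Icc 1 n, X k ω) (n : ℕ) :
    MemLp (fun ω => S n ω / n) 2 P :=
  .of_bound (measurable_div_of_eq_sum hX hS n).aestronglyMeasurable 1
    (ae_of_all _ fun ω => abs_div_le_one_of_abs_le_one hXb hS n ω)

theorem tendstoInMeasure_div_of_condExp [IsProbabilityMeasure P] (hX : ∀ n, Measurable (X n))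
    (hXb : ∀ n, 1 ≤ n → ∀ ω, |X n ω| ≤ 1) {α : ℝ} (hα : |α| ≤ 1 / 2)
    (hcond : ∀ n, 2 ≤ n → P[X (n + 1) | sigmaUpTo X n] =ᵐ[P] fun ω => α * (X 1 ω + X n ω))
    {S : ℕ → Ω → ℝ} (hS : ∀ n ω, S n ω = ∑ k ∈ Finset.Icc 1 n, X k ω) :
    TendstoInMeasure P (fun n ω => S n ω / n) atTop fun ω => α / (1 - α) * X 1 ω := by
  have hfirst : MemLp (fun ω => α / (1 - α) * X 1 ω) 2 P :=
    (MemLp.of_bound (hX 1).aestronglyMeasurable 1 (ae_of_all _ (hXb 1 le_rfl))).const_mul _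
  refine tendstoInMeasure_of_tendsto_integral_sq
    (fun n => ((memLp_div_of_eq_sum hX hXb hS n).sub hfirst).integrable_sq) ?_
  refine squeeze_zero' (Eventually.of_forall fun n => integral_nonneg fun ω => sq_nonneg _) ?_
    (tendsto_const_div_atTop_nhds_zero_nat 16)
  filter_upwards [eventually_ge_atTop 1] with n hn
  exact integral_sq_div_sub_le hX hXb hα hcond hS hn

theorem integral_comp_mul_first [IsFiniteMeasure P] (hX1 : Measurable (X 1))
    (hX1val : ∀ ω, X 1 ω = 1 ∨ X 1 ω = -1 ∨ X 1 ω = 0) {p q r : ℝ} (hp : 0 ≤ p) (hq : 0 ≤ q)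
    (hr : 0 ≤ r) (hX1p : P {ω | X 1 ω = 1} = ENNReal.ofReal p)
    (hX1q : P {ω | X 1 ω = -1} = ENNReal.ofReal q) (hX1r : P {ω | X 1 ω = 0} = ENNReal.ofReal r)
    (a : ℝ) (g : ℝ → ℝ) :
    ∫ ω, g (a * X 1 ω) ∂P = p * g a + r * g 0 + q * g (-a) := by
  rw [integral_comp_of_sign_valued hX1 hX1val fun x => g (a * x)]
  simp only [measureReal_def, hX1p, hX1q, hX1r, ENNReal.toReal_ofReal, hp, hq, hr, mul_one,
    mul_neg, mul_zero]
  ring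

theorem tendsto_integral_comp_div [IsProbabilityMeasure P] (hX : ∀ n, Measurable (X n))
    (hXb : ∀ n, 1 ≤ n → ∀ ω, |X n ω| ≤ 1) (hX1val : ∀ ω, X 1 ω = 1 ∨ X 1 ω = -1 ∨ X 1 ω = 0)
    {α : ℝ} (hα : |α| ≤ 1 / 2)
    (hcond : ∀ n, 2 ≤ n → P[X (n + 1) | sigmaUpTo X n] =ᵐ[P] fun ω => α * (X 1 ω + X n ω))
    {S : ℕ → Ω → ℝ} (hS : ∀ n ω, S n ω = ∑ k ∈ Finset.Icc 1 n, X k ω) {p q r : ℝ} (hp : 0 ≤ p)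
    (hq : 0 ≤ q) (hr : 0 ≤ r) (hX1p : P {ω | X 1 ω = 1} = ENNReal.ofReal p)
    (hX1q : P {ω | X 1 ω = -1} = ENNReal.ofReal q) (hX1r : P {ω | X 1 ω = 0} = ENNReal.ofReal r)
    {g : ℝ → ℝ} (hg : Continuous g) :
    Tendsto (fun n : ℕ => ∫ ω, g (S n ω / n) ∂P) atTop
      (𝓝 (p * g (α / (1 - α)) + r * g 0 + q * g (-(α / (1 - α))))) := by
  rw [← integral_comp_mul_first (hX 1) hX1val hp hq hr hX1p hX1q hX1r]
  exact tendsto_integral_comp_of_tendstoInMeasure isCompact_Icc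
    (fun n => (measurable_div_of_eq_sum hX hS n).aestronglyMeasurable)
    (fun n => ae_of_all _ fun ω => abs_le.1 (abs_div_le_one_of_abs_le_one hXb hS n ω))
    (tendstoInMeasure_div_of_condExp hX hXb hα hcond hS) hg

end ERWD

theorem erwd_first_and_recent_memory_weak_limit_general
    {Ω : Type*} [MeasurableSpace Ω] (P : Measure Ω) [IsProbabilityMeasure P]
    (p q r : ℝ) (hp : 0 < p) (hq : 0 < q)
    (hr : 0 < r) (hpqr : p + q + r = 1)
    (X : ℕ → Ω → ℝ) (hXmeas : ∀ n, Measurable (X n))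
    (hXval : ∀ n, 1 ≤ n → ∀ ω, X n ω = 1 ∨ X n ω = -1 ∨ X n ω = 0)
    (hX1p : P {ω | X 1 ω = 1} = ENNReal.ofReal p)
    (hX1q : P {ω | X 1 ω = -1} = ENNReal.ofReal q)
    (hX1r : P {ω | X 1 ω = 0} = ENNReal.ofReal r)
    (hcondp : ∀ n : ℕ, 2 ≤ n →
      P[Set.indicator {ω | X (n + 1) ω = 1} (fun _ => (1 : ℝ)) | sigmaUpTo X n]
        =ᵐ[P] fun ω =>
          (p * ((if X 1 ω = 1 then (1 : ℝ) else 0) + (if X n ω = 1 then (1 : ℝ) else 0))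
            + q * ((if X 1 ω = -1 then (1 : ℝ) else 0)
              + (if X n ω = -1 then (1 : ℝ) else 0))) / 2)
    (hcondq : ∀ n : ℕ, 2 ≤ n →
      P[Set.indicator {ω | X (n + 1) ω = -1} (fun _ => (1 : ℝ)) | sigmaUpTo X n]
        =ᵐ[P] fun ω =>
          (q * ((if X 1 ω = 1 then (1 : ℝ) else 0) + (if X n ω = 1 then (1 : ℝ) else 0))
            + p * ((if X 1 ω = -1 then (1 : ℝ) else 0)
              + (if X n ω = -1 then (1 : ℝ) else 0))) / 2)
    (S : ℕ → Ω → ℝ) (hS : ∀ n ω, S n ω = ∑ k ∈ Finset.Icc 1 n, X k ω)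
    :
    TendstoInDist (fun n : ℕ => Measure.map (fun ω => S n ω / n) P)
      (ENNReal.ofReal p • Measure.dirac ((p - q) / (2 + q - p))
        + ENNReal.ofReal r • Measure.dirac 0
        + ENNReal.ofReal q • Measure.dirac (-((p - q) / (2 + q - p)))) ∧
    (∀ r' : ℝ, 0 < r' →
      Tendsto (fun n : ℕ => ∫ ω, (S n ω / n) ^ r' ∂P) atTop
        (𝓝 (∫ x, x ^ r' ∂(ENNReal.ofReal p • Measure.dirac ((p - q) / (2 + q - p))
          + ENNReal.ofReal r • Measure.dirac 0
          + ENNReal.ofReal q • Measure.dirac (-((p - q) / (2 + q - p))) : Measure ℝ)))) ∧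
    Tendsto (fun n : ℕ => ∫ ω, S n ω / n ∂P) atTop
      (𝓝 ((p - q) ^ 2 / (2 + q - p))) ∧
    Tendsto (fun n : ℕ => variance (fun ω => S n ω / n) P) atTop
      (𝓝 ((p - q) ^ 2 / (2 + q - p) ^ 2 * (p + q - (p - q) ^ 2))) := by
  have hα : |(p - q) / 2| ≤ 1 / 2 := abs_le.2 ⟨by linarith, by linarith⟩
  have h2qp : 2 + q - p ≠ 0 := by linarith
  have ha : (p - q) / 2 / (1 - (p - q) / 2) = (p - q) / (2 + q - p) := by
    rw [show 1 - (p - q) / 2 = (2 + q - p) / 2 by ring, div_div_div_cancel_right₀ two_ne_zero]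
  have hXb : ∀ n, 1 ≤ n → ∀ ω, |X n ω| ≤ 1 := fun n hn ω => by
    rcases hXval n hn ω with h | h | h <;> norm_num [h]
  have hlim : ∀ g : ℝ → ℝ, Continuous g → Tendsto (fun n : ℕ => ∫ ω, g (S n ω / n) ∂P) atTop
      (𝓝 (p * g ((p - q) / (2 + q - p)) + r * g 0 + q * g (-((p - q) / (2 + q - p))))) :=
    fun g hg => ha ▸ tendsto_integral_comp_div hXmeas hXb (hXval 1 le_rfl) hα
      (fun n hn => condExp_succ_eq_of_condExp_indicator hXmeas hXval (by omega)
        (hcondp n hn) (hcondq n hn)) hS hp.le hq.le hr.le hX1p hX1q hX1r hg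
  simp only [integral_add_smul_dirac _ hp.le hq.le hr.le]
  refine ⟨(tendstoInDist_map_iff fun n => (measurable_div_of_eq_sum hXmeas hS n).aemeasurable).2
    fun f => ?_, fun r' hr' => hlim _ (continuous_rpow_const hr'.le), ?_, ?_⟩
  · simpa only [integral_add_smul_dirac _ hp.le hq.le hr.le] using hlim f f.continuous
  · convert hlim (fun x => x) continuous_id using 2
    field_simp
    ring
  · convert tendsto_variance_of_tendsto_integral (memLp_div_of_eq_sum hXmeas hXb hS)
      (hlim (fun x => x) continuous_id) (hlim (· ^ 2) (continuous_pow 2)) using 2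
    field_simp
    ring

/-- for the ERWD remembering the first and the most recent step, `Sₙ/n`
converges in distribution to the three-point law
`p·δ_{(p−q)/(2+q−p)} + r·δ₀ + q·δ_{−(p−q)/(2+q−p)}`; moreover all moments of `Sₙ/n`
converge to the corresponding moments of the limit law, in particular the mean and the
variance converge. -/
theorem erwd_first_and_recent_memory_weak_limit
    {Ω : Type*} [MeasurableSpace Ω] (P : Measure Ω) [IsProbabilityMeasure P]
    (p q r : ℝ) (hp : 0 < p) (hp1 : p < 1) (hq : 0 < q) (hq1 : q < 1)
    (hr : 0 < r) (hr1 : r < 1) (hpqr : p + q + r = 1)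
    (X : ℕ → Ω → ℝ) (hXmeas : ∀ n, Measurable (X n))
    (hXval : ∀ n, 1 ≤ n → ∀ ω, X n ω = 1 ∨ X n ω = -1 ∨ X n ω = 0)
    (hX1p : P {ω | X 1 ω = 1} = ENNReal.ofReal p)
    (hX1q : P {ω | X 1 ω = -1} = ENNReal.ofReal q)
    (hX1r : P {ω | X 1 ω = 0} = ENNReal.ofReal r)
    (hX2p : P[Set.indicator {ω | X 2 ω = 1} (fun _ => (1 : ℝ)) | sigmaUpTo X 1]
      =ᵐ[P] fun ω =>
        p * (if X 1 ω = 1 then (1 : ℝ) else 0) + q * (if X 1 ω = -1 then (1 : ℝ) else 0))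
    (hX2q : P[Set.indicator {ω | X 2 ω = -1} (fun _ => (1 : ℝ)) | sigmaUpTo X 1]
      =ᵐ[P] fun ω =>
        q * (if X 1 ω = 1 then (1 : ℝ) else 0) + p * (if X 1 ω = -1 then (1 : ℝ) else 0))
    (hcondp : ∀ n : ℕ, 2 ≤ n →
      P[Set.indicator {ω | X (n + 1) ω = 1} (fun _ => (1 : ℝ)) | sigmaUpTo X n]
        =ᵐ[P] fun ω =>
          (p * ((if X 1 ω = 1 then (1 : ℝ) else 0) + (if X n ω = 1 then (1 : ℝ) else 0))
            + q * ((if X 1 ω = -1 then (1 : ℝ) else 0)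
              + (if X n ω = -1 then (1 : ℝ) else 0))) / 2)
    (hcondq : ∀ n : ℕ, 2 ≤ n →
      P[Set.indicator {ω | X (n + 1) ω = -1} (fun _ => (1 : ℝ)) | sigmaUpTo X n]
        =ᵐ[P] fun ω =>
          (q * ((if X 1 ω = 1 then (1 : ℝ) else 0) + (if X n ω = 1 then (1 : ℝ) else 0))
            + p * ((if X 1 ω = -1 then (1 : ℝ) else 0)
              + (if X n ω = -1 then (1 : ℝ) else 0))) / 2)
    (S : ℕ → Ω → ℝ) (hS : ∀ n ω, S n ω = ∑ k ∈ Finset.Icc 1 n, X k ω)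
    :
    TendstoInDist (fun n : ℕ => Measure.map (fun ω => S n ω / n) P)
      (ENNReal.ofReal p • Measure.dirac ((p - q) / (2 + q - p))
        + ENNReal.ofReal r • Measure.dirac 0
        + ENNReal.ofReal q • Measure.dirac (-((p - q) / (2 + q - p)))) ∧
    (∀ r' : ℝ, 0 < r' →
      Tendsto (fun n : ℕ => ∫ ω, (S n ω / n) ^ r' ∂P) atTop
        (𝓝 (∫ x, x ^ r' ∂(ENNReal.ofReal p • Measure.dirac ((p - q) / (2 + q - p))
          + ENNReal.ofReal r • Measure.dirac 0
          + ENNReal.ofReal q • Measure.dirac (-((p - q) / (2 + q - p))) : Measure ℝ)))) ∧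
    Tendsto (fun n : ℕ => ∫ ω, S n ω / n ∂P) atTop
      (𝓝 ((p - q) ^ 2 / (2 + q - p))) ∧
    Tendsto (fun n : ℕ => variance (fun ω => S n ω / n) P) atTop
      (𝓝 ((p - q) ^ 2 / (2 + q - p) ^ 2 * (p + q - (p - q) ^ 2))) :=
  erwd_first_and_recent_memory_weak_limit_general P p q r hp hq hr hpqr X hXmeas hXval hX1p hX1q
    hX1r hcondp hcondq S hS
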